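/- Let β ∈ (−2, −1) and r > 1 be real numbers. Then the function x ↦ (1 − x^r − (1−x)^r) x^β (1−x)^β is integrable on (0,1) and ∫_0^1 (1 − x^r − (1−x)^r) x^β (1−x)^β dx = (2(2β+3)/(β+1)) B(β+2, β+2) − (2(2β+2+r)/(β+1)) B(β+1+r, β+2), where B(a,b) = Γ(a)Γ(b)/Γ(a+b) is the Beta function. -/

import Mathlib

/-!
Writing `1 = x + (1 - x)`, the integrand is `J(x) + J(1 - x)` with
`J(x) = (x^(β+1) - x^(β+r)) (1-x)^β`, so by the symmetry `x ↦ 1 - x` the integral is `2 ∫₀¹ J`.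
Since `β < -1`, `(1-x)^β` is not integrable at `1`, but `x^(β+1) - x^(β+r) = O(1 - x)` there
(Bernoulli), so `J` is. To evaluate `∫₀¹ J`, integrate the derivative of
`Φ(x) = (x^(β+2) - x^(β+r+1)) (1-x)^(β+1)`, which tends to `0` at both endpoints:
`Φ' = (2β+3) x^(β+1) (1-x)^(β+1) - (2β+2+r) x^(β+r) (1-x)^(β+1) - (β+1) J`,
and the first two terms are Beta integrals.
-/

open MeasureTheory Real Set Filter Topology ProbabilityTheory

theorem ofReal_rpow_mul_one_sub_rpow {x : ℝ} (hx : x ∈ Icc 0 1) (α β : ℝ) :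
    ((x ^ (α - 1) * (1 - x) ^ (β - 1) : ℝ) : ℂ)
      = (x : ℂ) ^ ((α : ℂ) - 1) * (1 - (x : ℂ)) ^ ((β : ℂ) - 1) := by
  rw [Complex.ofReal_mul, Complex.ofReal_cpow hx.1, Complex.ofReal_cpow (sub_nonneg.2 hx.2)]
  push_cast
  rfl

theorem integrableOn_rpow_mul_one_sub_rpow {α β : ℝ} (hα : 0 < α) (hβ : 0 < β) :
    IntegrableOn (fun x : ℝ => x ^ (α - 1) * (1 - x) ^ (β - 1)) (Ioo 0 1) := by
  have h : IntegrableOn _ (Ioc (0 : ℝ) 1) :=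
    Integrable.re (Complex.betaIntegral_convergent (u := α) (v := β) (by simpa) (by simpa)).1
  refine (h.congr_fun (fun x hx => ?_) measurableSet_Ioc).mono_set Ioo_subset_Ioc_self
  simp [← ofReal_rpow_mul_one_sub_rpow (Ioc_subset_Icc_self hx)]

theorem integral_rpow_mul_one_sub_rpow {α β : ℝ} (hα : 0 < α) (hβ : 0 < β) :
    ∫ x in Ioo 0 1, x ^ (α - 1) * (1 - x) ^ (β - 1) = beta α β := by
  rw [beta_eq_betaIntegralReal α β hα hβ, Complex.betaIntegral,
    ← intervalIntegral.integral_congr (fun x hx => ofReal_rpow_mul_one_sub_rpow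
      (uIcc_of_le (zero_le_one' ℝ) ▸ hx) α β),
    intervalIntegral.integral_ofReal, Complex.ofReal_re,
    intervalIntegral.integral_of_le zero_le_one, integral_Ioc_eq_integral_Ioo]

theorem integrableOn_Ioo_comp_one_sub_iff {E : Type*} [NormedAddCommGroup E] {f : ℝ → E} :
    IntegrableOn (fun x => f (1 - x)) (Ioo 0 1) ↔ IntegrableOn f (Ioo 0 1) := by
  simpa [Function.comp_def] using
    (volume.measurePreserving_sub_left (1 : ℝ)).integrableOn_comp_preimage
      (measurableEmbedding_subLeft 1) (f := f) (s := Ioo 0 1)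

theorem setIntegral_Ioo_comp_one_sub {E : Type*} [NormedAddCommGroup E] [NormedSpace ℝ E]
    (f : ℝ → E) : ∫ x in Ioo 0 1, f (1 - x) = ∫ x in Ioo 0 1, f x := by
  simpa using (volume.measurePreserving_sub_left (1 : ℝ)).setIntegral_preimage_emb
    (measurableEmbedding_subLeft 1) f (Ioo 0 1)

theorem one_sub_rpow_le_max_mul {x : ℝ} (hx0 : 0 ≤ x) (hx1 : x ≤ 1) (s : ℝ) :
    1 - x ^ s ≤ max 1 s * (1 - x) := by
  rcases le_total s 1 with hs | hs
  · calc 1 - x ^ s ≤ 1 - x := by linarith [self_le_rpow_of_le_one hx0 hx1 hs]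
      _ ≤ max 1 s * (1 - x) := le_mul_of_one_le_left (by linarith) (le_max_left 1 s)
  · have h := one_add_mul_self_le_rpow_one_add (s := x - 1) (by linarith) hs
    rw [add_sub_cancel] at h
    calc 1 - x ^ s ≤ s * (1 - x) := by linarith
      _ ≤ max 1 s * (1 - x) := mul_le_mul_of_nonneg_right (le_max_right 1 s) (by linarith)

theorem rpow_sub_rpow_le_max_mul {x : ℝ} (hx0 : 0 < x) (hx1 : x ≤ 1) (a c : ℝ) :
    x ^ a - x ^ c ≤ max 1 (c - a) * x ^ a * (1 - x) := by
  have h := mul_le_mul_of_nonneg_left (one_sub_rpow_le_max_mul hx0.le hx1 (c - a))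
    (rpow_nonneg hx0.le a)
  rw [mul_sub, mul_one, ← rpow_add hx0, add_sub_cancel] at h
  linarith

theorem integrableOn_rpow_sub_rpow_mul_one_sub_rpow {a c b : ℝ} (ha : -1 < a) (hac : a ≤ c)
    (hb : -2 < b) : IntegrableOn (fun x : ℝ => (x ^ a - x ^ c) * (1 - x) ^ b) (Ioo 0 1) := by
  have hdom := (integrableOn_rpow_mul_one_sub_rpow (α := a + 1) (β := b + 2) (by linarith)
    (by linarith)).const_mul (max 1 (c - a))
  refine Integrable.mono' hdom (by fun_prop : Measurable _).aestronglyMeasurable ?_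
  filter_upwards [ae_restrict_mem measurableSet_Ioo] with x ⟨hx0, hx1⟩
  have h1x : 0 < 1 - x := sub_pos.2 hx1
  rw [add_sub_cancel_right, show b + 2 - 1 = b + 1 by ring, rpow_add_one h1x.ne',
    norm_mul, Real.norm_of_nonneg (sub_nonneg.2 (rpow_le_rpow_of_exponent_ge hx0 hx1.le hac)),
    Real.norm_of_nonneg (rpow_nonneg h1x.le b)]
  nlinarith [mul_le_mul_of_nonneg_right (rpow_sub_rpow_le_max_mul hx0 hx1.le a c)
    (rpow_nonneg h1x.le b)]

theorem hasDerivAt_rpow_sub_rpow_mul_one_sub_rpow {x : ℝ} (hx : x ∈ Ioo 0 1) (a c b : ℝ) :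
    HasDerivAt (fun y : ℝ => (y ^ (a + 1) - y ^ (c + 1)) * (1 - y) ^ (b + 1))
      ((a + b + 2) * (x ^ a * (1 - x) ^ (b + 1)) - (c + b + 2) * (x ^ c * (1 - x) ^ (b + 1))
        - (b + 1) * ((x ^ a - x ^ c) * (1 - x) ^ b)) x := by
  have hx0 : x ≠ 0 := hx.1.ne'
  have h1x : 1 - x ≠ 0 := (sub_pos.2 hx.2).ne'
  have hpow (p : ℝ) : HasDerivAt (fun y : ℝ => y ^ (p + 1)) ((p + 1) * x ^ p) x := by
    simpa using hasDerivAt_rpow_const (p := p + 1) (Or.inl hx0)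
  have hpow' : HasDerivAt (fun y : ℝ => (1 - y) ^ (b + 1)) (-((b + 1) * (1 - x) ^ b)) x := by
    refine (((hasDerivAt_id x).const_sub 1).rpow_const (p := b + 1) (Or.inl h1x)).congr_deriv ?_
    simp only [add_sub_cancel_right, id]
    ring
  refine (((hpow a).fun_sub (hpow c)).fun_mul hpow').congr_deriv ?_
  rw [rpow_add_one hx0, rpow_add_one hx0, rpow_add_one h1x]
  ring

theorem tendsto_rpow_sub_rpow_mul_one_sub_rpow_nhdsGT_zero {a c : ℝ} (ha : -1 < a) (hc : -1 < c)
    (b : ℝ) : Tendsto (fun y : ℝ => (y ^ (a + 1) - y ^ (c + 1)) * (1 - y) ^ (b + 1))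
      (𝓝[>] 0) (𝓝 0) := by
  have hcont : ContinuousAt (fun y : ℝ => (y ^ (a + 1) - y ^ (c + 1)) * (1 - y) ^ (b + 1)) 0 :=
    ((continuousAt_rpow_const 0 _ (Or.inr (by linarith))).sub
      (continuousAt_rpow_const 0 _ (Or.inr (by linarith)))).mul
      ((continuousAt_const.sub continuousAt_id).rpow_const (Or.inl (by norm_num)))
  simpa [zero_rpow (by linarith : a + 1 ≠ 0), zero_rpow (by linarith : c + 1 ≠ 0)]
    using hcont.tendsto.mono_left nhdsWithin_le_nhds

theorem tendsto_rpow_sub_rpow_mul_one_sub_rpow_nhdsLT_one {a c b : ℝ} (hac : a ≤ c)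
    (hb : -2 < b) : Tendsto (fun y : ℝ => (y ^ (a + 1) - y ^ (c + 1)) * (1 - y) ^ (b + 1))
      (𝓝[<] 1) (𝓝 0) := by
  have hbound : Tendsto (fun y : ℝ => max 1 (c - a) * y ^ (a + 1) * (1 - y) ^ (b + 2))
      (𝓝[<] 1) (𝓝 0) := by
    have hcont : ContinuousAt (fun y : ℝ => max 1 (c - a) * y ^ (a + 1) * (1 - y) ^ (b + 2)) 1 :=
      (continuousAt_const.mul (continuousAt_rpow_const 1 _ (Or.inl one_ne_zero))).mul
        ((continuousAt_const.sub continuousAt_id).rpow_const (Or.inr (by linarith)))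
    simpa [zero_rpow (by linarith : b + 2 ≠ 0)] using hcont.tendsto.mono_left nhdsWithin_le_nhds
  refine tendsto_of_tendsto_of_tendsto_of_le_of_le' tendsto_const_nhds hbound ?_ ?_
    <;> filter_upwards [Ioo_mem_nhdsLT (zero_lt_one' ℝ)] with x ⟨hx0, hx1⟩
  · exact mul_nonneg (sub_nonneg.2 (rpow_le_rpow_of_exponent_ge hx0 hx1.le (by linarith)))
      (rpow_nonneg (sub_pos.2 hx1).le _)
  · rw [show b + 2 = b + 1 + 1 by ring, rpow_add_one (sub_pos.2 hx1).ne' (b + 1)]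
    have h := rpow_sub_rpow_le_max_mul hx0 hx1.le (a + 1) (c + 1)
    rw [add_sub_add_right_eq_sub] at h
    nlinarith [mul_le_mul_of_nonneg_right h (rpow_nonneg (sub_pos.2 hx1).le (b + 1))]

theorem mul_integral_rpow_sub_rpow_mul_one_sub_rpow {a c b : ℝ} (ha : -1 < a) (hac : a ≤ c)
    (hb : -2 < b) :
    (b + 1) * ∫ x in Ioo 0 1, (x ^ a - x ^ c) * (1 - x) ^ b
      = (a + b + 2) * beta (a + 1) (b + 2) - (c + b + 2) * beta (c + 1) (b + 2) := by
  have hbeta {p : ℝ} (hp : -1 < p) :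
      IntegrableOn (fun x : ℝ => x ^ p * (1 - x) ^ (b + 1)) (Ioo 0 1) ∧
      ∫ x in Ioo 0 1, x ^ p * (1 - x) ^ (b + 1) = beta (p + 1) (b + 2) := by
    have hp' : 0 < p + 1 := by linarith
    have hb' : 0 < b + 2 := by linarith
    have hint := integrableOn_rpow_mul_one_sub_rpow hp' hb'
    have hval := integral_rpow_mul_one_sub_rpow hp' hb'
    simp only [add_sub_cancel_right, show b + 2 - 1 = b + 1 by ring] at hint hval
    exact ⟨hint, hval⟩
  obtain ⟨hAint, hAval⟩ := hbeta ha
  obtain ⟨hCint, hCval⟩ := hbeta (ha.trans_le hac)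
  have hJint := integrableOn_rpow_sub_rpow_mul_one_sub_rpow ha hac hb
  have hACint : IntegrableOn (fun x : ℝ => (a + b + 2) * (x ^ a * (1 - x) ^ (b + 1))
      - (c + b + 2) * (x ^ c * (1 - x) ^ (b + 1))) (Ioo 0 1) :=
    (hAint.const_mul _).sub (hCint.const_mul _)
  have hderiv_int := hACint.sub (hJint.const_mul (b + 1))
  have hFTC := intervalIntegral.integral_eq_sub_of_hasDerivAt_of_tendsto zero_lt_one
    (fun x hx => hasDerivAt_rpow_sub_rpow_mul_one_sub_rpow hx a c b)
    ((intervalIntegrable_iff_integrableOn_Ioo_of_le zero_le_one).2 hderiv_int)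
    (tendsto_rpow_sub_rpow_mul_one_sub_rpow_nhdsGT_zero ha (ha.trans_le hac) b)
    (tendsto_rpow_sub_rpow_mul_one_sub_rpow_nhdsLT_one hac hb)
  rw [intervalIntegral.integral_of_le zero_le_one, integral_Ioc_eq_integral_Ioo,
    integral_sub hACint (hJint.const_mul _),
    integral_sub (hAint.const_mul _) (hCint.const_mul _), integral_const_mul, integral_const_mul,
    integral_const_mul, hAval, hCval] at hFTC
  linarith

/-- For `β ∈ (-2,-1)` and `r > 1`, the function `x ↦ (1 - x^r - (1-x)^r) x^β (1-x)^β` is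
integrable on `(0,1)` and its integral equals
`(2(2β+3)/(β+1)) B(β+2, β+2) - (2(2β+2+r)/(β+1)) B(β+1+r, β+2)`, where
`B(a,b) = Γ(a)Γ(b)/Γ(a+b)`. -/
theorem stmt_7 (β r : ℝ) (hβ : β ∈ Set.Ioo (-2 : ℝ) (-1)) (hr : 1 < r) :
    IntegrableOn (fun x : ℝ => (1 - x ^ r - (1 - x) ^ r) * x ^ β * (1 - x) ^ β)
      (Set.Ioo 0 1) ∧
    (∫ x in Set.Ioo (0 : ℝ) 1, (1 - x ^ r - (1 - x) ^ r) * x ^ β * (1 - x) ^ β)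
      = (2 * (2 * β + 3) / (β + 1)) *
          (Real.Gamma (β + 2) * Real.Gamma (β + 2) / Real.Gamma ((β + 2) + (β + 2)))
        - (2 * (2 * β + 2 + r) / (β + 1)) *
          (Real.Gamma (β + 1 + r) * Real.Gamma (β + 2) /
            Real.Gamma ((β + 1 + r) + (β + 2))) := by
  obtain ⟨hβ2, hβ1⟩ := hβ
  have hJint : IntegrableOn (fun x : ℝ => (x ^ (β + 1) - x ^ (β + r)) * (1 - x) ^ β) (Ioo 0 1) :=
    integrableOn_rpow_sub_rpow_mul_one_sub_rpow (by linarith) (by linarith) (by linarith)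
  have hJint' := integrableOn_Ioo_comp_one_sub_iff.2 hJint
  have hsplit : EqOn
      (fun x : ℝ => (x ^ (β + 1) - x ^ (β + r)) * (1 - x) ^ β
        + ((1 - x) ^ (β + 1) - (1 - x) ^ (β + r)) * (1 - (1 - x)) ^ β)
      (fun x : ℝ => (1 - x ^ r - (1 - x) ^ r) * x ^ β * (1 - x) ^ β) (Ioo 0 1) := by
    rintro x ⟨hx0, hx1⟩
    dsimp only
    rw [sub_sub_cancel, rpow_add_one hx0.ne', rpow_add_one (sub_pos.2 hx1).ne', rpow_add hx0,
      rpow_add (sub_pos.2 hx1)]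
    ring
  refine ⟨(hJint.add hJint').congr_fun hsplit measurableSet_Ioo, ?_⟩
  have hIBP := mul_integral_rpow_sub_rpow_mul_one_sub_rpow (a := β + 1) (c := β + r) (b := β)
    (by linarith) (by linarith) (by linarith)
  rw [show β + 1 + 1 = β + 2 by ring, show β + r + 1 = β + 1 + r by ring] at hIBP
  have hsym := setIntegral_Ioo_comp_one_sub fun x : ℝ => (x ^ (β + 1) - x ^ (β + r)) * (1 - x) ^ β
  beta_reduce at hsym
  rw [← setIntegral_congr_fun measurableSet_Ioo hsplit, integral_add hJint hJint', hsym]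
  change _ = _ * beta (β + 2) (β + 2) - _ * beta (β + 1 + r) (β + 2)
  rw [div_mul_eq_mul_div, div_mul_eq_mul_div, ← sub_div, eq_div_iff (by linarith : β + 1 < 0).ne]
  linear_combination 2 * hIBP
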